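/- Let Σ^{-1} be a symmetric positive-definite K×K matrix with nonnegative entries, β_{kj} > 0, d_j ≥ 0. Then the CTM MAP objective f(θ) = Σ_j d_j log(Σ_k θ_k β_{kj}) - ½ (log θ)ᵀ Σ^{-1} (log θ) is concave on the interior of the unit simplex Δ ⊂ ℝ^K, being the sum of the concave log-likelihood term and the concave prior term. -/

import Mathlib

open Finset Matrix

/-! The log-likelihood is a nonnegative combination of logarithms of linear forms that are
positive on the simplex, hence concave. For the prior, `x ↦ xᵀ Σ⁻¹ x` is convex, and, because
`Σ⁻¹` has nonnegative entries, antitone on the nonpositive orthant. The componentwise map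
`θ ↦ log θ` is concave for the pointwise order and sends the simplex into that orthant, so the
composite is convex. -/

theorem ConvexOn.comp_concaveOn_of_mapsTo {𝕜 E F β : Type*} [Semiring 𝕜] [PartialOrder 𝕜]
    [AddCommMonoid E] [AddCommMonoid F] [PartialOrder F] [AddCommMonoid β] [PartialOrder β]
    [SMul 𝕜 E] [SMul 𝕜 F] [SMul 𝕜 β] {s : Set E} {t : Set F} {f : E → F} {g : F → β}
    (hg : ConvexOn 𝕜 t g) (hf : ConcaveOn 𝕜 s f) (hg' : AntitoneOn g t)
    (hst : Set.MapsTo f s t) : ConvexOn 𝕜 s (g ∘ f) :=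
  ⟨hf.1, fun _ hx _ hy _ _ ha hb hab =>
    (hg' (hg.1 (hst hx) (hst hy) ha hb hab) (hst (hf.1 hx hy ha hb hab))
      (hf.2 hx hy ha hb hab)).trans (hg.2 (hst hx) (hst hy) ha hb hab)⟩

theorem ConcaveOn.sum {𝕜 E β ι : Type*} [Semiring 𝕜] [PartialOrder 𝕜] [AddCommMonoid E]
    [AddCommMonoid β] [PartialOrder β] [IsOrderedAddMonoid β] [SMul 𝕜 E] [Module 𝕜 β]
    {s : Set E} (hs : Convex 𝕜 s) {t : Finset ι} {f : ι → E → β}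
    (hf : ∀ i ∈ t, ConcaveOn 𝕜 s (f i)) : ConcaveOn 𝕜 s fun x => ∑ i ∈ t, f i x := by
  induction t using Finset.cons_induction with
  | empty => simpa using concaveOn_const (0 : β) hs
  | cons i t hit ih =>
    simp only [Finset.sum_cons]
    exact (hf i (mem_cons_self i t)).add (ih fun j hj => hf j (mem_cons_of_mem hj))

variable {ι : Type*} [Fintype ι]

theorem concaveOn_log_sum_mul (w : ι → ℝ) :
    ConcaveOn ℝ {θ : ι → ℝ | 0 < ∑ k, θ k * w k} fun θ => Real.log (∑ k, θ k * w k) := by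
  have := strictConcaveOn_log_Ioi.concaveOn.comp_linearMap (Fintype.linearCombination ℝ w)
  simpa only [Set.preimage, Function.comp_def, Fintype.linearCombination_apply, smul_eq_mul,
    Set.mem_Ioi] using this

theorem sum_mul_pos_of_mem_stdSimplex {θ w : ι → ℝ} (hθ : θ ∈ stdSimplex ℝ ι)
    (hw : ∀ k, 0 < w k) : 0 < ∑ k, θ k * w k := by
  obtain ⟨k, -, hk⟩ := Finset.exists_lt_of_sum_lt (by simp [hθ.2] : ∑ i, (0 : ι → ℝ) i < ∑ i, θ i)
  exact Finset.sum_pos' (fun i _ => mul_nonneg (hθ.1 i) (hw i).le)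
    ⟨k, mem_univ k, mul_pos hk (hw k)⟩

omit [Fintype ι] in
theorem convex_setOf_forall_pos : Convex ℝ {θ : ι → ℝ | ∀ k, 0 < θ k} := by
  rw [Set.ofPred_forall]
  exact convex_iInter fun k => convex_halfSpace_gt (LinearMap.proj k).isLinear 0

omit [Fintype ι] in
theorem concaveOn_log_pi :
    ConcaveOn ℝ {θ : ι → ℝ | ∀ k, 0 < θ k} fun θ k => Real.log (θ k) :=
  ⟨convex_setOf_forall_pos, fun _ hx _ hy _ _ ha hb hab k =>
    strictConcaveOn_log_Ioi.concaveOn.2 (hx k) (hy k) ha hb hab⟩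

theorem mapsTo_log_stdSimplex_Iic :
    Set.MapsTo (fun (θ : ι → ℝ) k => Real.log (θ k)) (stdSimplex ℝ ι) (Set.Iic 0) :=
  fun _ hθ k => Real.log_nonpos (hθ.1 k) (mem_Icc_of_mem_stdSimplex hθ k).2

namespace Matrix

theorem PosSemidef.convexOn_dotProduct_mulVec {A : Matrix ι ι ℝ} (hA : A.PosSemidef) :
    ConvexOn ℝ Set.univ fun x => x ⬝ᵥ A *ᵥ x := by
  refine ⟨convex_univ, fun x _ y _ a b ha hb hab => ?_⟩
  have hxy := hA.dotProduct_mulVec_nonneg (x - y)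
  rw [star_trivial] at hxy
  obtain rfl : b = 1 - a := by linarith
  -- `a q(x) + b q(y) - q(a x + b y) = a b q(x - y)`
  simp only [mulVec_add, mulVec_smul, mulVec_sub, dotProduct_add, add_dotProduct, dotProduct_smul,
    smul_dotProduct, dotProduct_sub, sub_dotProduct, smul_eq_mul] at hxy ⊢
  nlinarith [mul_nonneg ha hb]

theorem antitoneOn_dotProduct_mulVec_Iic {A : Matrix ι ι ℝ} (hA : ∀ i j, 0 ≤ A i j) :
    AntitoneOn (fun x => x ⬝ᵥ A *ᵥ x) (Set.Iic 0) := by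
  intro u _ v hv huv
  simp only [dotProduct, mulVec, mul_sum]
  refine sum_le_sum fun i _ => sum_le_sum fun j _ => ?_
  have hvi : v i ≤ 0 := hv i
  have hvj : v j ≤ 0 := hv j
  have : v i * v j ≤ u i * u j := by nlinarith [huv i, huv j]
  nlinarith [hA i j]

end Matrix

/-- The CTM MAP objective
`f(θ) = ∑ j d j * log (∑ k θ k β k j) - ½ (log θ)ᵀ Σ⁻¹ (log θ)`
is concave on the interior of the unit simplex, where `Σ⁻¹ = A` is symmetric positive
definite with nonnegative entries, `β > 0` and `d ≥ 0`. -/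
theorem ctm_objective_concave {K V : ℕ} (A : Matrix (Fin K) (Fin K) ℝ)
    (hA_pd : A.PosDef) (hA_nonneg : ∀ i j, 0 ≤ A i j)
    (β : Fin K → Fin V → ℝ) (hβ : ∀ k j, 0 < β k j)
    (d : Fin V → ℝ) (hd : ∀ j, 0 ≤ d j) :
    ConcaveOn ℝ {θ : Fin K → ℝ | θ ∈ stdSimplex ℝ (Fin K) ∧ ∀ k, 0 < θ k}
      (fun θ => (∑ j, d j * Real.log (∑ k, θ k * β k j)) -
        (1 / 2) * ((fun i => Real.log (θ i)) ⬝ᵥ A.mulVec fun i => Real.log (θ i))) := by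
  set S := {θ : Fin K → ℝ | θ ∈ stdSimplex ℝ (Fin K) ∧ ∀ k, 0 < θ k}
  have hS : Convex ℝ S := (convex_stdSimplex ℝ _).inter convex_setOf_forall_pos
  have likelihood : ConcaveOn ℝ S fun θ => ∑ j, d j * Real.log (∑ k, θ k * β k j) :=
    ConcaveOn.sum hS fun j _ => ((concaveOn_log_sum_mul fun k => β k j).subset
      (fun θ hθ => sum_mul_pos_of_mem_stdSimplex hθ.1 fun k => hβ k j) hS).smul (hd j)
  have prior : ConvexOn ℝ S fun θ => (fun i => Real.log (θ i)) ⬝ᵥ A *ᵥ fun i => Real.log (θ i) :=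
    (hA_pd.posSemidef.convexOn_dotProduct_mulVec.subset (Set.subset_univ _) (convex_Iic 0)
      |>.comp_concaveOn_of_mapsTo (concaveOn_log_pi.subset (fun _ hθ => hθ.2) hS)
        (antitoneOn_dotProduct_mulVec_Iic hA_nonneg)
        (mapsTo_log_stdSimplex_Iic.mono_left fun _ hθ => hθ.1))
  exact likelihood.sub (prior.smul (by norm_num))
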